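/- Decay of the exponential of a banded block-triangular block-Toeplitz subgenerator: let K ≥ n, let U^{(K)} be U = (U_0,…,U_{n−1}) padded with K−n zero blocks, and write e^{T(U^{(K)})} = T(A^{(K)}) with first block row (A_0,…,A_{K−1}). Then for every σ > 1 and every i = 0,…,K−1, A_i·1 ≤ e^{α(σ^{n−1}−1)} σ^{−i}·1 componentwise, where α = max_j(−(U_0)_{jj}). -/

import Mathlib

/-- A subgenerator: nonnegative off-diagonal entries and nonpositive row sums. -/
def IsSubgenerator {k : Type*} [Fintype k] [DecidableEq k] (Q : Matrix k k ℝ) : Prop :=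
  (∀ i j, i ≠ j → 0 ≤ Q i j) ∧ ∀ i, ∑ j, Q i j ≤ 0

/-- The block upper-triangular block-Toeplitz matrix with first block row
`[U 0, U 1, …, U (n-1)]`. -/
def blockToeplitz {n m : ℕ} {α : Type*} [Zero α] (U : Fin n → Matrix (Fin m) (Fin m) α) :
    Matrix (Fin n × Fin m) (Fin n × Fin m) α := fun p q =>
  if h : (p.1 : ℕ) ≤ (q.1 : ℕ) then
    U ⟨(q.1 : ℕ) - (p.1 : ℕ), by have := q.1.isLt; omega⟩ p.2 q.2
  else 0

lemma rowsum_blockToeplitz {L m : ℕ} (W : Fin L → Matrix (Fin m) (Fin m) ℝ) (b : Fin L)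
    (r : Fin m) (w g : ℕ → ℝ) (hg : ∀ (d : ℕ) (h : d < L), g d = ∑ s, W ⟨d, h⟩ r s) :
    ∑ q : Fin L × Fin m, blockToeplitz W (b, r) q * w (q.1 : ℕ)
      = ∑ d ∈ Finset.range (L - (b : ℕ)), g d * w ((b : ℕ) + d) := by
  rw [Fintype.sum_prod_type]
  have h1 : ∀ c : Fin L, ∑ s, blockToeplitz W (b, r) (c, s) * w (c : ℕ)
      = (if (b : ℕ) ≤ (c : ℕ) then g ((c : ℕ) - (b : ℕ)) else 0) * w (c : ℕ) := by
    intro c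
    by_cases h : (b : ℕ) ≤ (c : ℕ)
    · simp only [blockToeplitz, dif_pos h, if_pos h, hg ((c : ℕ) - (b : ℕ)) (by omega),
        Finset.sum_mul]
    · simp [blockToeplitz, h]
  rw [Finset.sum_congr rfl fun c _ => h1 c]
  rw [Fin.sum_univ_eq_sum_range
    (fun c => (if (b : ℕ) ≤ c then g (c - (b : ℕ)) else 0) * w c) L]
  rw [Finset.range_eq_Ico, ← Finset.sum_Ico_consecutive _ (Nat.zero_le (b : ℕ)) b.isLt.le]
  have h2 : ∑ c ∈ Finset.Ico 0 (b : ℕ),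
      (if (b : ℕ) ≤ c then g (c - (b : ℕ)) else 0) * w c = 0 := by
    apply Finset.sum_eq_zero
    intro c hc
    rw [Finset.mem_Ico] at hc
    rw [if_neg (by omega), zero_mul]
  rw [h2, zero_add, Finset.sum_Ico_eq_sum_range]
  apply Finset.sum_congr rfl
  intro d _
  rw [if_pos (by omega)]
  congr 1
  congr 1
  omega

lemma key_scalar {n : ℕ} (hn : 0 < n) (g : ℕ → ℝ) (σ α : ℝ) (hσ : 1 < σ)
    (hg1 : ∀ d, 1 ≤ d → 0 ≤ g d) (hg0 : ∀ d, n ≤ d → g d = 0)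
    (hsum : ∑ d ∈ Finset.range n, g d ≤ 0) (hgα : -g 0 ≤ α) :
    ∀ j, 1 ≤ j → ∑ d ∈ Finset.range j, g d * σ ^ d ≤ α * (σ ^ (n - 1) - 1) := by
  intro j hj
  have hσ0 : (0:ℝ) < σ := lt_trans one_pos hσ
  have hσ1 : (1:ℝ) ≤ σ ^ (n - 1) := one_le_pow₀ hσ.le
  have hsplit : ∑ d ∈ Finset.range j, g d * σ ^ d
      = g 0 + ∑ d ∈ Finset.Ico 1 j, g d * σ ^ d := by
    rw [Finset.range_eq_Ico, Finset.sum_eq_sum_Ico_succ_bot (by omega)]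
    simp
  have hterm : ∀ d ∈ Finset.Ico 1 j, g d * σ ^ d ≤ g d * σ ^ (n - 1) := by
    intro d hd
    rw [Finset.mem_Ico] at hd
    by_cases h : d < n
    · exact mul_le_mul_of_nonneg_left (pow_le_pow_right₀ hσ.le (by omega)) (hg1 d hd.1)
    · rw [hg0 d (by omega), zero_mul, zero_mul]
  have htail : ∑ d ∈ Finset.Ico 1 j, g d ≤ -g 0 := by
    have hsub : ∑ d ∈ Finset.Ico 1 j, g d ≤ ∑ d ∈ Finset.Ico 1 (max j n), g d := by
      apply Finset.sum_le_sum_of_subset_of_nonneg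
      · exact Finset.Ico_subset_Ico le_rfl (le_max_left _ _)
      · intro d hd _
        rw [Finset.mem_Ico] at hd
        exact hg1 d hd.1
    have heq : ∑ d ∈ Finset.Ico 1 n, g d = ∑ d ∈ Finset.Ico 1 (max j n), g d := by
      apply Finset.sum_subset (Finset.Ico_subset_Ico le_rfl (le_max_right _ _))
      intro d hd hnd
      rw [Finset.mem_Ico] at hd hnd
      exact hg0 d (by omega)
    have hsum' : g 0 + ∑ d ∈ Finset.Ico 1 n, g d ≤ 0 := by
      rw [← Finset.sum_eq_sum_Ico_succ_bot hn, ← Finset.range_eq_Ico]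
      exact hsum
    linarith
  have h3 : ∑ d ∈ Finset.Ico 1 j, g d * σ ^ (n - 1) ≤ (-g 0) * σ ^ (n - 1) := by
    rw [← Finset.sum_mul]
    exact mul_le_mul_of_nonneg_right htail (by positivity)
  have h4 : (-g 0) * (σ ^ (n - 1) - 1) ≤ α * (σ ^ (n - 1) - 1) :=
    mul_le_mul_of_nonneg_right hgα (by linarith)
  calc ∑ d ∈ Finset.range j, g d * σ ^ d
      = g 0 + ∑ d ∈ Finset.Ico 1 j, g d * σ ^ d := hsplit
    _ ≤ g 0 + ∑ d ∈ Finset.Ico 1 j, g d * σ ^ (n - 1) := by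
        exact add_le_add (le_refl _) (Finset.sum_le_sum hterm)
    _ ≤ g 0 + (-g 0) * σ ^ (n - 1) := by linarith [h3]
    _ = (-g 0) * (σ ^ (n - 1) - 1) := by ring
    _ ≤ α * (σ ^ (n - 1) - 1) := h4

lemma exp_nonneg_and_mulvec_le {ι : Type*} [Fintype ι] [DecidableEq ι]
    (M : Matrix ι ι ℝ) (hod : ∀ p q, p ≠ q → 0 ≤ M p q)
    (v : ι → ℝ) (hv : ∀ p, 0 ≤ v p) (lam : ℝ) (hlam : 0 ≤ lam)
    (hMv : ∀ p, ∑ q, M p q * v q ≤ lam * v p) :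
    (∀ p q, 0 ≤ NormedSpace.exp M p q) ∧
      ∀ p, ∑ q, NormedSpace.exp M p q * v q ≤ Real.exp lam * v p := by
  classical
  set c : ℝ := ∑ p, |M p p| with hc
  have hc0 : 0 ≤ c := Finset.sum_nonneg fun _ _ => abs_nonneg _
  have hcd : ∀ p, -M p p ≤ c := fun p =>
    le_trans (neg_le_abs _) (Finset.single_le_sum (f := fun p => |M p p|)
      (fun _ _ => abs_nonneg _) (Finset.mem_univ p))
  set N : Matrix ι ι ℝ := M + c • 1 with hNdef
  have hone : ∀ p q : ι, (c • (1 : Matrix ι ι ℝ)) p q = if p = q then c else 0 := by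
    intro p q
    by_cases h : p = q <;> simp [Matrix.one_apply, h]
  have hNnn : ∀ p q, 0 ≤ N p q := by
    intro p q
    rw [hNdef, Matrix.add_apply, hone]
    by_cases h : p = q
    · subst h; rw [if_pos rfl]; linarith [hcd p]
    · rw [if_neg h, add_zero]; exact hod p q h
  have hNv : ∀ p, ∑ q, N p q * v q ≤ (lam + c) * v p := by
    intro p
    have h1 : ∑ q, N p q * v q = (∑ q, M p q * v q) + c * v p := by
      simp only [hNdef, Matrix.add_apply, add_mul, Finset.sum_add_distrib]
      congr 1
      rw [Finset.sum_congr rfl fun q _ => by rw [hone p q]]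
      simp
    rw [h1]; linarith [hMv p]
  have hpow : ∀ (k : ℕ) (p q : ι), 0 ≤ (N ^ k) p q := by
    intro k
    induction k with
    | zero => intro p q; rw [pow_zero]; rw [Matrix.one_apply]; positivity
    | succ k ih =>
      intro p q
      rw [pow_succ, Matrix.mul_apply]
      exact Finset.sum_nonneg fun t _ => mul_nonneg (ih p t) (hNnn t q)
  have hpowv : ∀ (k : ℕ) (p : ι), ∑ q, (N ^ k) p q * v q ≤ (lam + c) ^ k * v p := by
    intro k
    induction k with
    | zero => intro p; simp [Matrix.one_apply]
    | succ k ih =>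
      intro p
      have h1 : ∑ q, (N ^ (k + 1)) p q * v q = ∑ t, N p t * ∑ q, (N ^ k) t q * v q := by
        rw [pow_succ']
        simp only [Matrix.mul_apply, Finset.sum_mul, Finset.mul_sum]
        rw [Finset.sum_comm]
        apply Finset.sum_congr rfl; intro t _
        apply Finset.sum_congr rfl; intro q _
        ring
      rw [h1]
      calc ∑ t, N p t * ∑ q, (N ^ k) t q * v q
          ≤ ∑ t, N p t * ((lam + c) ^ k * v t) :=
            Finset.sum_le_sum fun t _ => mul_le_mul_of_nonneg_left (ih t) (hNnn p t)
        _ = (lam + c) ^ k * ∑ t, N p t * v t := by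
            rw [Finset.mul_sum]; apply Finset.sum_congr rfl; intros; ring
        _ ≤ (lam + c) ^ k * ((lam + c) * v p) :=
            mul_le_mul_of_nonneg_left (hNv p) (by positivity)
        _ = (lam + c) ^ (k + 1) * v p := by ring
  -- install norm instances
  letI : SeminormedRing (Matrix ι ι ℝ) := Matrix.linftyOpSemiNormedRing
  letI : NormedRing (Matrix ι ι ℝ) := Matrix.linftyOpNormedRing
  letI : NormedAlgebra ℝ (Matrix ι ι ℝ) := Matrix.linftyOpNormedAlgebra
  have hhs : HasSum (fun k : ℕ => (Nat.factorial k : ℝ)⁻¹ • N ^ k) (NormedSpace.exp N) := by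
    rw [NormedSpace.exp_eq_tsum ℝ]
    exact (NormedSpace.expSeries_summable' (𝕂 := ℝ) N).hasSum
  have hentry : ∀ p q, HasSum (fun k : ℕ => (Nat.factorial k : ℝ)⁻¹ * (N ^ k) p q)
      (NormedSpace.exp N p q) := by
    intro p q
    let E : Matrix ι ι ℝ →ₗ[ℝ] ℝ :=
      { toFun := fun X => X p q, map_add' := fun _ _ => rfl, map_smul' := fun _ _ => rfl }
    have := hhs.mapL (LinearMap.toContinuousLinearMap E)
    exact this
  have hNexp : ∀ p q, 0 ≤ NormedSpace.exp N p q := by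
    intro p q
    rw [← (hentry p q).tsum_eq]
    exact tsum_nonneg fun k => mul_nonneg (by positivity) (hpow k p q)
  have hexpNv : ∀ p, ∑ q, NormedSpace.exp N p q * v q ≤ Real.exp (lam + c) * v p := by
    intro p
    have hL : HasSum (fun k : ℕ => ∑ q, (Nat.factorial k : ℝ)⁻¹ * (N ^ k) p q * v q)
        (∑ q, NormedSpace.exp N p q * v q) :=
      hasSum_sum fun q _ => (hentry p q).mul_right (v q)
    have hR : HasSum (fun k : ℕ => (Nat.factorial k : ℝ)⁻¹ * (lam + c) ^ k * v p)
        (Real.exp (lam + c) * v p) := by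
      have h1 : HasSum (fun k : ℕ => (Nat.factorial k : ℝ)⁻¹ • (lam + c) ^ k)
          (NormedSpace.exp (lam + c)) := by
        rw [NormedSpace.exp_eq_tsum ℝ]
        exact (NormedSpace.expSeries_summable' (𝕂 := ℝ) (lam + c)).hasSum
      rw [Real.exp_eq_exp_ℝ]
      simpa [smul_eq_mul] using h1.mul_right (v p)
    refine hasSum_le (fun k => ?_) hL hR
    have h2 : ∑ q, (Nat.factorial k : ℝ)⁻¹ * (N ^ k) p q * v q
        = (Nat.factorial k : ℝ)⁻¹ * ∑ q, (N ^ k) p q * v q := by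
      rw [Finset.mul_sum]; apply Finset.sum_congr rfl; intros; ring
    rw [h2, mul_assoc]
    exact mul_le_mul_of_nonneg_left (hpowv k p) (by positivity)
  have hcomm : Commute M (c • (1 : Matrix ι ι ℝ)) := (Commute.one_right M).smul_right c
  have hsplit : NormedSpace.exp N = Real.exp c • NormedSpace.exp M := by
    rw [hNdef, Matrix.exp_add_of_commute M (c • 1) hcomm]
    have hd : (c • (1 : Matrix ι ι ℝ)) = Matrix.diagonal (fun _ => c) := by
      ext p q
      rw [hone]
      by_cases h : p = q <;> simp [Matrix.diagonal, h]
    rw [hd, Matrix.exp_diagonal]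
    have hd2 : Matrix.diagonal (NormedSpace.exp (fun _ : ι => c))
        = Real.exp c • (1 : Matrix ι ι ℝ) := by
      ext p q
      by_cases h : p = q <;>
        simp [Matrix.diagonal, Matrix.one_apply, h, Real.exp_eq_exp_ℝ]
    rw [hd2, mul_smul_comm, mul_one]
  have hent2 : ∀ p q, NormedSpace.exp N p q = Real.exp c * NormedSpace.exp M p q := by
    intro p q
    rw [hsplit]
    rfl
  have hMexp : ∀ p q, 0 ≤ NormedSpace.exp M p q := by
    intro p q
    have h := hNexp p q
    rw [hent2 p q] at h
    exact nonneg_of_mul_nonneg_right h (Real.exp_pos c)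
  refine ⟨hMexp, fun p => ?_⟩
  have h3 : ∑ q, NormedSpace.exp N p q * v q
      = Real.exp c * ∑ q, NormedSpace.exp M p q * v q := by
    rw [Finset.mul_sum]
    apply Finset.sum_congr rfl
    intro q _
    rw [hent2 p q]; ring
  have h4 := hexpNv p
  rw [h3] at h4
  have h5 : Real.exp (lam + c) = Real.exp c * (Real.exp lam) := by
    rw [Real.exp_add]; ring
  rw [h5, mul_assoc] at h4
  exact le_of_mul_le_mul_left h4 (Real.exp_pos c)

/-- Decay of the exponential of a banded block-triangular block-Toeplitz subgenerator:
if `K ≥ n`, `U^{(K)}` is `U` padded with `K−n` zero blocks, and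
`e^{T(U^{(K)})} = T(A^{(K)})` with first block row `(A_0,…,A_{K−1})`, then for every
`σ > 1` and every `i`, `A_i·1 ≤ e^{α(σ^{n−1}−1)} σ^{−i}·1` componentwise, where
`α = max_j (−(U_0)_{jj})`. -/
theorem exp_blockToeplitz_decay {n m K : ℕ} (hn : 0 < n) (hK : n ≤ K)
    (U : Fin n → Matrix (Fin m) (Fin m) ℝ)
    (hsub : IsSubgenerator (blockToeplitz U))
    (α : ℝ) (hα : α = ⨆ j : Fin m, -(U ⟨0, hn⟩ j j))
    (Upad : Fin K → Matrix (Fin m) (Fin m) ℝ)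
    (hUpad : ∀ i : Fin K, Upad i = if h : (i : ℕ) < n then U ⟨i, h⟩ else 0)
    (A : Fin K → Matrix (Fin m) (Fin m) ℝ)
    (hA : NormedSpace.exp (blockToeplitz Upad) = blockToeplitz A) :
    ∀ σ : ℝ, 1 < σ → ∀ (i : Fin K) (r : Fin m),
      ∑ s, A i r s ≤ Real.exp (α * (σ ^ (n - 1) - 1)) * (σ ^ (i : ℕ))⁻¹ := by
  intro σ hσ i r
  have hσ0 : (0:ℝ) < σ := lt_trans one_pos hσ
  have hK0 : 0 < K := lt_of_lt_of_le hn hK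
  -- entries of U are nonneg off the "diagonal"
  have hU_entry : ∀ (d : ℕ) (h : d < n) (t s : Fin m), (d = 0 → t ≠ s) →
      0 ≤ U ⟨d, h⟩ t s := by
    intro d h t s hd
    have hne : ((⟨0, hn⟩ : Fin n), t) ≠ ((⟨d, h⟩ : Fin n), s) := by
      intro hEq
      have h1 : (0:ℕ) = d := congrArg (fun x => ((x.1 : Fin n) : ℕ)) hEq
      have h2 : t = s := congrArg Prod.snd hEq
      exact hd h1.symm h2
    have h0 := hsub.1 _ _ hne
    simpa [blockToeplitz] using h0
  -- the row-sum profile functions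
  set g : Fin m → ℕ → ℝ :=
    fun t d => if h : d < n then ∑ s, U ⟨d, h⟩ t s else 0 with hgdef
  have hg_U : ∀ (t : Fin m) (d : ℕ) (h : d < n), g t d = ∑ s, U ⟨d, h⟩ t s :=
    fun t d h => dif_pos h
  have hg_pad : ∀ (t : Fin m) (d : ℕ) (h : d < K), g t d = ∑ s, Upad ⟨d, h⟩ t s := by
    intro t d hd
    rw [hUpad]
    by_cases h : d < n
    · rw [hg_U t d h, dif_pos h]
    · rw [hgdef]
      simp only [dif_neg h]
      simp [Matrix.zero_apply]
  have hg1 : ∀ (t : Fin m) (d : ℕ), 1 ≤ d → 0 ≤ g t d := by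
    intro t d hd
    by_cases h : d < n
    · rw [hg_U t d h]
      exact Finset.sum_nonneg fun s _ => hU_entry d h t s (by omega)
    · rw [hgdef]; simp [h]
  have hg0 : ∀ (t : Fin m) (d : ℕ), n ≤ d → g t d = 0 := by
    intro t d hd; rw [hgdef]; simp [Nat.not_lt.mpr hd]
  have hsumg : ∀ t : Fin m, ∑ d ∈ Finset.range n, g t d ≤ 0 := by
    intro t
    have e := rowsum_blockToeplitz U ⟨0, hn⟩ t (fun _ => 1) (g t) (hg_U t)
    simp only [mul_one, Nat.sub_zero] at e
    rw [← e]
    exact hsub.2 (⟨0, hn⟩, t)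
  have hgα : ∀ t : Fin m, -(g t 0) ≤ α := by
    intro t
    have h1 : U ⟨0, hn⟩ t t ≤ g t 0 := by
      rw [hg_U t 0 hn]
      have := Finset.sum_eq_add_sum_sdiff_singleton_of_mem (Finset.mem_univ t)
        (fun s => U ⟨0, hn⟩ t s)
      rw [this]
      have h2 : 0 ≤ ∑ s ∈ Finset.univ \ {t}, U ⟨0, hn⟩ t s :=
        Finset.sum_nonneg fun s hs => by
          rw [Finset.mem_sdiff, Finset.mem_singleton] at hs
          exact hU_entry 0 hn t s (fun _ => (Ne.symm hs.2))
      linarith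
    have h3 : -(U ⟨0, hn⟩ t t) ≤ α := by
      rw [hα]
      exact le_ciSup (f := fun j : Fin m => -(U ⟨0, hn⟩ j j))
        (Set.Finite.bddAbove (Set.finite_range _)) t
    linarith
  have hα0 : 0 ≤ α := by
    have h1 : g r 0 ≤ 0 := by
      have := hsumg r
      have h2 : ∑ d ∈ Finset.range n, g r d
          = g r 0 + ∑ d ∈ Finset.Ico 1 n, g r d := by
        rw [Finset.range_eq_Ico, Finset.sum_eq_sum_Ico_succ_bot hn]
      have h3 : 0 ≤ ∑ d ∈ Finset.Ico 1 n, g r d :=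
        Finset.sum_nonneg fun d hd => hg1 r d (Finset.mem_Ico.mp hd).1
      linarith
    linarith [hgα r]
  set lam : ℝ := α * (σ ^ (n - 1) - 1) with hlamdef
  have hlam0 : 0 ≤ lam :=
    mul_nonneg hα0 (by have : (1:ℝ) ≤ σ ^ (n-1) := one_le_pow₀ hσ.le; linarith)
  -- off-diagonal nonnegativity of the padded generator
  have hod : ∀ p q : Fin K × Fin m, p ≠ q → 0 ≤ blockToeplitz Upad p q := by
    rintro ⟨b, t⟩ ⟨c, s⟩ hne
    by_cases h : (b : ℕ) ≤ (c : ℕ)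
    · have : blockToeplitz Upad (b, t) (c, s)
          = Upad ⟨(c : ℕ) - (b : ℕ), by omega⟩ t s := dif_pos h
      rw [this, hUpad]
      by_cases h2 : (c : ℕ) - (b : ℕ) < n
      · rw [dif_pos h2]
        apply hU_entry _ h2 t s
        intro h3 h4
        apply hne
        have : b = c := by
          apply Fin.ext; omega
        rw [this, h4]
      · rw [dif_neg h2]; simp
    · have : blockToeplitz Upad (b, t) (c, s) = 0 := dif_neg h
      rw [this]
  -- the drift condition
  have hQv : ∀ p : Fin K × Fin m,
      ∑ q, blockToeplitz Upad p q * σ ^ ((q.1 : ℕ)) ≤ lam * σ ^ ((p.1 : ℕ)) := by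
    rintro ⟨b, t⟩
    have e := rowsum_blockToeplitz Upad b t (fun x => σ ^ x) (g t) (hg_pad t)
    rw [e]
    have e2 : ∀ d ∈ Finset.range (K - (b : ℕ)),
        g t d * σ ^ ((b : ℕ) + d) = σ ^ (b : ℕ) * (g t d * σ ^ d) := by
      intro d _; rw [pow_add]; ring
    rw [Finset.sum_congr rfl e2, ← Finset.mul_sum]
    rw [mul_comm lam _]
    apply mul_le_mul_of_nonneg_left _ (by positivity)
    exact key_scalar hn (g t) σ α hσ (hg1 t) (hg0 t) (hsumg t) (hgα t)
      (K - (b : ℕ)) (by have := b.isLt; omega)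
  obtain ⟨hnn, hle⟩ := exp_nonneg_and_mulvec_le (blockToeplitz Upad) hod
    (fun p => σ ^ ((p.1 : ℕ))) (fun p => by positivity) lam hlam0 hQv
  -- nonnegativity of the A blocks
  have hAnn : ∀ (c : Fin K) (s : Fin m), 0 ≤ A c r s := by
    intro c s
    have h0 := hnn (⟨0, hK0⟩, r) (c, s)
    rw [hA] at h0
    simpa [blockToeplitz] using h0
  set gA : ℕ → ℝ := fun d => if h : d < K then ∑ s, A ⟨d, h⟩ r s else 0 with hgAdef
  have hgA : ∀ (d : ℕ) (h : d < K), gA d = ∑ s, A ⟨d, h⟩ r s := fun d h => dif_pos h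
  have hgAnn : ∀ d, 0 ≤ gA d := by
    intro d
    by_cases h : d < K
    · rw [hgA d h]; exact Finset.sum_nonneg fun s _ => hAnn _ s
    · rw [hgAdef]; simp [h]
  have heval : ∑ q : Fin K × Fin m, blockToeplitz A ((⟨0, hK0⟩ : Fin K), r) q * σ ^ ((q.1 : ℕ))
      = ∑ d ∈ Finset.range K, gA d * σ ^ d := by
    have e := rowsum_blockToeplitz A ⟨0, hK0⟩ r (fun x => σ ^ x) gA hgA
    simpa using e
  have hfin : ∑ d ∈ Finset.range K, gA d * σ ^ d ≤ Real.exp lam := by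
    have h0 := hle (⟨0, hK0⟩, r)
    rw [hA] at h0
    simp only at h0
    rw [heval] at h0
    simpa using h0
  have hsingle : gA (i : ℕ) * σ ^ (i : ℕ) ≤ Real.exp lam :=
    le_trans (Finset.single_le_sum (f := fun d => gA d * σ ^ d)
      (fun d _ => mul_nonneg (hgAnn d) (by positivity))
      (Finset.mem_range.mpr i.isLt)) hfin
  have hgAi : gA (i : ℕ) = ∑ s, A i r s := by
    rw [hgA _ i.isLt]
  rw [hgAi] at hsingle
  rw [hlamdef] at hsingle
  rw [← div_eq_mul_inv, le_div_iff₀ (by positivity)]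
  exact hsingle
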